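/- Let (H,K,A,C) and (K,L,B,D) be Yetter-Drinfeld data such that the cotensor product A □^K B is a pure k-submodule of A ⊗ B. If M ∈ _A YD^C(H,K) and N ∈ _B YD^D(K,L), then M ⊗ N, with action (a ⊗ b)·(m ⊗ n) = am ⊗ bn of A □^K B and coaction m ⊗ n ↦ m_{[0]} ⊗ n_{[0]} ⊗ (n_{[1]} ⊗_K m_{[1]}) over D ⊗_K C, is a generalized Yetter-Drinfeld module in _{A □^K B} YD^{D ⊗_K C}(H,L). -/

import Mathlib

/-! In Sweedler notation, for `a ⊗ b ∈ A □^K B`, the Yetter-Drinfeld condition for `M ⊗ N` is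
the chain
`(a₍₀₎m)₍₀₎ ⊗ (bn)₍₀₎ ⊗ (bn)₍₁₎ ⊗_K (a₍₀₎m)₍₁₎ ◁ a₍₋₁₎`
`  = a₍₀₎m₍₀₎ ⊗ (bn)₍₀₎ ⊗ (bn)₍₁₎ ⊗_K a₍₁₎ ▷ m₍₁₎`            (condition for `M`)
`  = a₍₀₎m₍₀₎ ⊗ (bn)₍₀₎ ⊗ (bn)₍₁₎ ◁ a₍₁₎ ⊗_K m₍₁₎`            (`K`-balancing)
`  = a m₍₀₎ ⊗ (b₍₀₎n)₍₀₎ ⊗ (b₍₀₎n)₍₁₎ ◁ b₍₋₁₎ ⊗_K m₍₁₎`      (cotensor condition)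
`  = a m₍₀₎ ⊗ b₍₀₎n₍₀₎ ⊗ b₍₁₎ ▷ n₍₁₎ ⊗_K m₍₁₎`                (condition for `N`).
-/

open TensorProduct Coalgebra

namespace YetterDrinfeld

open LinearMap

variable {k : Type*} [CommSemiring k]

section
variable {H A M C C' X : Type*}
  [AddCommMonoid H] [Module k H] [AddCommMonoid A] [Module k A] [AddCommMonoid M] [Module k M]
  [AddCommMonoid C] [Module k C] [AddCommMonoid C'] [Module k C'] [AddCommMonoid X] [Module k X]

/-- `x ⊗ m ↦ (x₍₀₎ m)₍₀₎ ⊗ (x₍₀₎ m)₍₁₎ ◁ x₍₋₁₎`, the left side of the Yetter-Drinfeld condition. -/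
def ydLeft (Δ : X →ₗ[k] H ⊗[k] A) (act : C ⊗[k] H →ₗ[k] C') (μ : A ⊗[k] M →ₗ[k] M)
    (ρ : M →ₗ[k] M ⊗[k] C) : X ⊗[k] M →ₗ[k] M ⊗[k] C' :=
  lTensor M act ∘ₗ (TensorProduct.assoc k M C H).toLinearMap ∘ₗ
    (TensorProduct.comm k H (M ⊗[k] C)).toLinearMap ∘ₗ lTensor H (ρ ∘ₗ μ) ∘ₗ
    (TensorProduct.assoc k H A M).toLinearMap ∘ₗ rTensor M Δ

/-- `x ⊗ m ↦ x₍₀₎ m₍₀₎ ⊗ x₍₁₎ ▷ m₍₁₎`, the right side of the Yetter-Drinfeld condition. -/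
def ydRight (Δ : X →ₗ[k] A ⊗[k] H) (act : H ⊗[k] C →ₗ[k] C') (μ : A ⊗[k] M →ₗ[k] M)
    (ρ : M →ₗ[k] M ⊗[k] C) : X ⊗[k] M →ₗ[k] M ⊗[k] C' :=
  map μ act ∘ₗ (tensorTensorTensorComm k A H M C).toLinearMap ∘ₗ lTensor (A ⊗[k] H) ρ ∘ₗ
    rTensor M Δ

/-- `a ⊗ m ↦ a m₍₀₎ ⊗ m₍₁₎` -/
def actZeroth (μ : A ⊗[k] M →ₗ[k] M) (ρ : M →ₗ[k] M ⊗[k] C) : A ⊗[k] M →ₗ[k] M ⊗[k] C :=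
  rTensor C μ ∘ₗ (TensorProduct.assoc k A M C).symm.toLinearMap ∘ₗ lTensor A ρ

variable {Y C'' : Type*} [AddCommMonoid Y] [Module k Y] [AddCommMonoid C''] [Module k C'']

lemma ydLeft_comp (Δ : X →ₗ[k] H ⊗[k] A) (ι : Y →ₗ[k] X) (q : C' →ₗ[k] C'')
    (act : C ⊗[k] H →ₗ[k] C') (μ : A ⊗[k] M →ₗ[k] M) (ρ : M →ₗ[k] M ⊗[k] C) :
    ydLeft (Δ ∘ₗ ι) (q ∘ₗ act) μ ρ = lTensor M q ∘ₗ ydLeft Δ act μ ρ ∘ₗ rTensor M ι := by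
  simp only [ydLeft, rTensor_comp, lTensor_comp, comp_assoc]

lemma ydRight_comp (Δ : X →ₗ[k] A ⊗[k] H) (ι : Y →ₗ[k] X) (q : C' →ₗ[k] C'')
    (act : H ⊗[k] C →ₗ[k] C') (μ : A ⊗[k] M →ₗ[k] M) (ρ : M →ₗ[k] M ⊗[k] C) :
    ydRight (Δ ∘ₗ ι) (q ∘ₗ act) μ ρ = lTensor M q ∘ₗ ydRight Δ act μ ρ ∘ₗ rTensor M ι := by
  simp only [ydRight, rTensor_comp, ← lTensor_comp_map, comp_assoc]

end

variable {H K L A B C D M N Q : Type*}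
  [AddCommMonoid H] [Module k H] [AddCommMonoid K] [Module k K] [AddCommMonoid L] [Module k L]
  [AddCommMonoid A] [Module k A] [AddCommMonoid B] [Module k B]
  [AddCommMonoid C] [Module k C] [AddCommMonoid D] [Module k D]
  [AddCommMonoid M] [Module k M] [AddCommMonoid N] [Module k N] [AddCommMonoid Q] [Module k Q]

def tensorAct (μ : A ⊗[k] M →ₗ[k] M) (ν : B ⊗[k] N →ₗ[k] N) :
    (A ⊗[k] B) ⊗[k] (M ⊗[k] N) →ₗ[k] M ⊗[k] N :=
  map μ ν ∘ₗ (tensorTensorTensorComm k A B M N).toLinearMap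

/-- `(m ⊗ c) ⊗ (n ⊗ d) ↦ (m ⊗ n) ⊗ (d ⊗ c)` -/
def shuffle : (M ⊗[k] C) ⊗[k] (N ⊗[k] D) →ₗ[k] (M ⊗[k] N) ⊗[k] (D ⊗[k] C) :=
  lTensor (M ⊗[k] N) (TensorProduct.comm k C D).toLinearMap ∘ₗ
    (tensorTensorTensorComm k M C N D).toLinearMap

def tensorCoact (ρ : M →ₗ[k] M ⊗[k] C) (ρ' : N →ₗ[k] N ⊗[k] D) :
    M ⊗[k] N →ₗ[k] (M ⊗[k] N) ⊗[k] (D ⊗[k] C) :=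
  shuffle ∘ₗ map ρ ρ'

lemma ydLeft_tensorAct (ΔLA : A →ₗ[k] H ⊗[k] A) (actRC : C ⊗[k] H →ₗ[k] C)
    (μ : A ⊗[k] M →ₗ[k] M) (ρ : M →ₗ[k] M ⊗[k] C) (ν : B ⊗[k] N →ₗ[k] N)
    (ρ' : N →ₗ[k] N ⊗[k] D) :
    ydLeft ((TensorProduct.assoc k H A B).toLinearMap ∘ₗ rTensor B ΔLA)
        (lTensor D actRC ∘ₗ (TensorProduct.assoc k D C H).toLinearMap)
        (tensorAct μ ν) (tensorCoact ρ ρ') =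
      shuffle ∘ₗ map (ydLeft ΔLA actRC μ ρ) (ρ' ∘ₗ ν) ∘ₗ
        (tensorTensorTensorComm k A B M N).toLinearMap := by
  ext a b m n
  simp only [ydLeft, tensorAct, tensorCoact, shuffle, AlgebraTensorModule.curry_apply,
    curry_apply, coe_restrictScalars, coe_comp, Function.comp_apply, LinearEquiv.coe_coe,
    rTensor_tmul, map_tmul, tensorTensorTensorComm_tmul]
  induction ΔLA a using TensorProduct.induction_on with
  | tmul h a' =>
    simp only [TensorProduct.assoc_tmul, lTensor_tmul, coe_comp, LinearEquiv.coe_coe,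
      Function.comp_apply, tensorTensorTensorComm_tmul, map_tmul, TensorProduct.comm_tmul]
    generalize ρ (μ (a' ⊗ₜ m)) = v
    generalize ρ' (ν (b ⊗ₜ n)) = w
    induction v using TensorProduct.induction_on with
    | tmul m' c => induction w using TensorProduct.induction_on <;> simp_all [tmul_add, add_tmul]
    | _ => simp_all [add_tmul]
  | _ => simp_all [add_tmul]

lemma ydRight_tensorAct (ΔRB : B →ₗ[k] B ⊗[k] L) (actLD : L ⊗[k] D →ₗ[k] D)
    (μ : A ⊗[k] M →ₗ[k] M) (ρ : M →ₗ[k] M ⊗[k] C) (ν : B ⊗[k] N →ₗ[k] N)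
    (ρ' : N →ₗ[k] N ⊗[k] D) :
    ydRight ((TensorProduct.assoc k A B L).symm.toLinearMap ∘ₗ lTensor A ΔRB)
        (rTensor C actLD ∘ₗ (TensorProduct.assoc k L D C).symm.toLinearMap)
        (tensorAct μ ν) (tensorCoact ρ ρ') =
      shuffle ∘ₗ map (actZeroth μ ρ) (ydRight ΔRB actLD ν ρ') ∘ₗ
        (tensorTensorTensorComm k A B M N).toLinearMap := by
  ext a b m n
  simp only [ydRight, actZeroth, tensorAct, tensorCoact, shuffle, AlgebraTensorModule.curry_apply,
    curry_apply, coe_restrictScalars, coe_comp, Function.comp_apply, LinearEquiv.coe_coe,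
    rTensor_tmul, lTensor_tmul, map_tmul, tensorTensorTensorComm_tmul]
  generalize ΔRB b = u
  generalize ρ m = v
  generalize ρ' n = w
  induction u using TensorProduct.induction_on with
  | tmul b' l =>
    induction v using TensorProduct.induction_on with
    | tmul m' c => induction w using TensorProduct.induction_on <;> simp_all [tmul_add]
    | _ => simp_all [tmul_add, add_tmul]
  | _ => simp_all [tmul_add, add_tmul]

variable {X : Type*} [AddCommMonoid X] [Module k X]

lemma shuffle_ydRight_eq_shuffle_ydLeft (ΔRA : A →ₗ[k] A ⊗[k] K) (ΔLB : B →ₗ[k] K ⊗[k] B)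
    (actLC : K ⊗[k] C →ₗ[k] C) (actRD : D ⊗[k] K →ₗ[k] D)
    (μ : A ⊗[k] M →ₗ[k] M) (ρ : M →ₗ[k] M ⊗[k] C) (ν : B ⊗[k] N →ₗ[k] N)
    (ρ' : N →ₗ[k] N ⊗[k] D) (q : D ⊗[k] C →ₗ[k] Q)
    (hq : ∀ d y c, q (actRD (d ⊗ₜ y) ⊗ₜ c) = q (d ⊗ₜ actLC (y ⊗ₜ c)))
    (ι : X →ₗ[k] A ⊗[k] B)
    (hι : rTensor B ΔRA ∘ₗ ι = ((TensorProduct.assoc k A K B).symm.toLinearMap ∘ₗ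
      lTensor A ΔLB) ∘ₗ ι) :
    lTensor (M ⊗[k] N) q ∘ₗ (shuffle ∘ₗ map (ydRight ΔRA actLC μ ρ) (ρ' ∘ₗ ν) ∘ₗ
        (tensorTensorTensorComm k A B M N).toLinearMap) ∘ₗ rTensor (M ⊗[k] N) ι =
      lTensor (M ⊗[k] N) q ∘ₗ (shuffle ∘ₗ map (actZeroth μ ρ) (ydLeft ΔLB actRD ν ρ') ∘ₗ
        (tensorTensorTensorComm k A B M N).toLinearMap) ∘ₗ rTensor (M ⊗[k] N) ι := by
  -- `((a ⊗ y) ⊗ b) ⊗ (m ⊗ n) ↦ a m₍₀₎ ⊗ (b n)₍₀₎ ⊗ q ((b n)₍₁₎ ◁ y ⊗ m₍₁₎)`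
  let Θ := lTensor (M ⊗[k] N) q ∘ₗ shuffle ∘ₗ
    map (actZeroth μ ρ) (ydLeft LinearMap.id actRD ν ρ') ∘ₗ
    (tensorTensorTensorComm k A (K ⊗[k] B) M N).toLinearMap ∘ₗ
    rTensor (M ⊗[k] N) (TensorProduct.assoc k A K B).toLinearMap
  have hRA : lTensor (M ⊗[k] N) q ∘ₗ shuffle ∘ₗ map (ydRight ΔRA actLC μ ρ) (ρ' ∘ₗ ν) ∘ₗ
      (tensorTensorTensorComm k A B M N).toLinearMap = Θ ∘ₗ rTensor (M ⊗[k] N) (rTensor B ΔRA) := by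
    ext a b m n
    simp only [Θ, ydLeft, ydRight, actZeroth, shuffle, AlgebraTensorModule.curry_apply,
      curry_apply, coe_restrictScalars, coe_comp, Function.comp_apply, LinearEquiv.coe_coe,
      rTensor_tmul, lTensor_tmul, map_tmul, tensorTensorTensorComm_tmul]
    induction ΔRA a using TensorProduct.induction_on with
    | tmul a' y =>
      simp only [rTensor_tmul, lTensor_tmul, map_tmul, TensorProduct.assoc_tmul,
        TensorProduct.comm_tmul, tensorTensorTensorComm_tmul, coe_comp, Function.comp_apply,
        LinearEquiv.coe_coe, id_coe, id_eq]
      generalize ρ m = v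
      generalize ρ' (ν (b ⊗ₜ n)) = w
      induction v using TensorProduct.induction_on with
      | tmul m' c =>
        induction w using TensorProduct.induction_on with
        | tmul n' d => simp [hq]
        | _ => simp_all [tmul_add, add_tmul]
      | _ => simp_all [tmul_add, add_tmul]
    | _ => simp_all [add_tmul]
  have hLB : lTensor (M ⊗[k] N) q ∘ₗ shuffle ∘ₗ map (actZeroth μ ρ) (ydLeft ΔLB actRD ν ρ') ∘ₗ
      (tensorTensorTensorComm k A B M N).toLinearMap =
      Θ ∘ₗ rTensor (M ⊗[k] N)
        ((TensorProduct.assoc k A K B).symm.toLinearMap ∘ₗ lTensor A ΔLB) := by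
    ext a b m n
    simp only [Θ, ydLeft, AlgebraTensorModule.curry_apply, curry_apply, coe_restrictScalars,
      coe_comp, Function.comp_apply, LinearEquiv.coe_coe, rTensor_tmul, lTensor_tmul, map_tmul,
      tensorTensorTensorComm_tmul]
    induction ΔLB b using TensorProduct.induction_on with
    | tmul y b' => simp
    | _ => simp_all [tmul_add, add_tmul]
  calc _ = (Θ ∘ₗ rTensor (M ⊗[k] N) (rTensor B ΔRA)) ∘ₗ rTensor (M ⊗[k] N) ι := by
        rw [← hRA]; simp only [comp_assoc]
    _ = (Θ ∘ₗ rTensor (M ⊗[k] N) ((TensorProduct.assoc k A K B).symm.toLinearMap ∘ₗ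
          lTensor A ΔLB)) ∘ₗ rTensor (M ⊗[k] N) ι := by
        simp only [comp_assoc, ← rTensor_comp, hι]
    _ = _ := by rw [← hLB]; simp only [comp_assoc]

/-- In the application `ι` is the inclusion of `A □^K B` into `A ⊗ B` and `q` the projection
`D ⊗ C → D ⊗_K C`. -/
lemma ydLeft_tensorAct_eq_ydRight_tensorAct
    {ΔLA : A →ₗ[k] H ⊗[k] A} {ΔRA : A →ₗ[k] A ⊗[k] K}
    {ΔLB : B →ₗ[k] K ⊗[k] B} {ΔRB : B →ₗ[k] B ⊗[k] L}
    {actLC : K ⊗[k] C →ₗ[k] C} {actRC : C ⊗[k] H →ₗ[k] C}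
    {actLD : L ⊗[k] D →ₗ[k] D} {actRD : D ⊗[k] K →ₗ[k] D}
    {μ : A ⊗[k] M →ₗ[k] M} {ρ : M →ₗ[k] M ⊗[k] C} {ν : B ⊗[k] N →ₗ[k] N}
    {ρ' : N →ₗ[k] N ⊗[k] D}
    (hM : ydLeft ΔLA actRC μ ρ = ydRight ΔRA actLC μ ρ)
    (hN : ydLeft ΔLB actRD ν ρ' = ydRight ΔRB actLD ν ρ')
    (q : D ⊗[k] C →ₗ[k] Q) (hq : ∀ d y c, q (actRD (d ⊗ₜ y) ⊗ₜ c) = q (d ⊗ₜ actLC (y ⊗ₜ c)))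
    (ι : X →ₗ[k] A ⊗[k] B)
    (hι : rTensor B ΔRA ∘ₗ ι = ((TensorProduct.assoc k A K B).symm.toLinearMap ∘ₗ
      lTensor A ΔLB) ∘ₗ ι) :
    ydLeft (((TensorProduct.assoc k H A B).toLinearMap ∘ₗ rTensor B ΔLA) ∘ₗ ι)
        (q ∘ₗ lTensor D actRC ∘ₗ (TensorProduct.assoc k D C H).toLinearMap)
        (tensorAct μ ν) (tensorCoact ρ ρ') =
      ydRight (((TensorProduct.assoc k A B L).symm.toLinearMap ∘ₗ lTensor A ΔRB) ∘ₗ ι)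
        (q ∘ₗ rTensor C actLD ∘ₗ (TensorProduct.assoc k L D C).symm.toLinearMap)
        (tensorAct μ ν) (tensorCoact ρ ρ') := by
  rw [ydLeft_comp, ydRight_comp, ydLeft_tensorAct, ydRight_tensorAct, hM, ← hN]
  exact shuffle_ydRight_eq_shuffle_ydLeft ΔRA ΔLB actLC actRD μ ρ ν ρ' q hq ι hι

end YetterDrinfeld

theorem genYD_tensor_is_genYD
    {k : Type} [CommRing k]
    {H : Type} [Ring H] [Bialgebra k H]
    {K : Type} [Ring K] [Bialgebra k K]
    {L : Type} [Ring L] [Bialgebra k L]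
    {A : Type} [Ring A] [Algebra k A]
    {B : Type} [Ring B] [Algebra k B]
    {C : Type} [AddCommGroup C] [Module k C]
    {D : Type} [AddCommGroup D] [Module k D]
    {M : Type} [AddCommGroup M] [Module k M]
    {N : Type} [AddCommGroup N] [Module k N]
    (ΔLA : A →ₗ[k] H ⊗[k] A) (ΔRA : A →ₗ[k] A ⊗[k] K)
    (ΔLB : B →ₗ[k] K ⊗[k] B) (ΔRB : B →ₗ[k] B ⊗[k] L)
    (actLC : K ⊗[k] C →ₗ[k] C) (actRC : C ⊗[k] H →ₗ[k] C)
    (actLD : L ⊗[k] D →ₗ[k] D) (actRD : D ⊗[k] K →ₗ[k] D)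
    (μ : A ⊗[k] M →ₗ[k] M) (ρ : M →ₗ[k] M ⊗[k] C)
    (ν : B ⊗[k] N →ₗ[k] N) (ρ' : N →ₗ[k] N ⊗[k] D)
    -- Yetter-Drinfeld compatibility for `M` and `N`
    (hYDM : (LinearMap.lTensor M actRC) ∘ₗ (TensorProduct.assoc k M C H).toLinearMap ∘ₗ
        (TensorProduct.comm k H (M ⊗[k] C)).toLinearMap ∘ₗ
        (LinearMap.lTensor H (ρ ∘ₗ μ)) ∘ₗ (TensorProduct.assoc k H A M).toLinearMap ∘ₗ
        (LinearMap.rTensor M ΔLA)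
      = (TensorProduct.map μ actLC) ∘ₗ (TensorProduct.tensorTensorTensorComm k A K M C).toLinearMap
          ∘ₗ (LinearMap.lTensor (A ⊗[k] K) ρ) ∘ₗ (LinearMap.rTensor M ΔRA))
    (hYDN : (LinearMap.lTensor N actRD) ∘ₗ (TensorProduct.assoc k N D K).toLinearMap ∘ₗ
        (TensorProduct.comm k K (N ⊗[k] D)).toLinearMap ∘ₗ
        (LinearMap.lTensor K (ρ' ∘ₗ ν)) ∘ₗ (TensorProduct.assoc k K B N).toLinearMap ∘ₗ
        (LinearMap.rTensor N ΔLB)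
      = (TensorProduct.map ν actLD) ∘ₗ (TensorProduct.tensorTensorTensorComm k B L N D).toLinearMap
          ∘ₗ (LinearMap.lTensor (B ⊗[k] L) ρ') ∘ₗ (LinearMap.rTensor N ΔRB))
    -- the cotensor product `A □^K B` and its purity
    (cot : Submodule k (A ⊗[k] B))
    (hcot : cot = LinearMap.ker ((LinearMap.rTensor B ΔRA) -
        (TensorProduct.assoc k A K B).symm.toLinearMap ∘ₗ (LinearMap.lTensor A ΔLB)))
    -- the `K`-balancing submodule of `D ⊗ C` presenting `D ⊗_K C`
    (S : Submodule k (D ⊗[k] C))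
    (hS : S = Submodule.span k {x | ∃ (d : D) (y : K) (c : C),
        x = actRD (d ⊗ₜ y) ⊗ₜ c - d ⊗ₜ actLC (y ⊗ₜ c)}) :
    -- the Yetter-Drinfeld compatibility condition for `M ⊗ N`
    (LinearMap.lTensor (M ⊗[k] N)
        (S.mkQ ∘ₗ (LinearMap.lTensor D actRC) ∘ₗ (TensorProduct.assoc k D C H).toLinearMap)) ∘ₗ
      (TensorProduct.assoc k (M ⊗[k] N) (D ⊗[k] C) H).toLinearMap ∘ₗ
      (TensorProduct.comm k H ((M ⊗[k] N) ⊗[k] (D ⊗[k] C))).toLinearMap ∘ₗ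
      (LinearMap.lTensor H
        (((LinearMap.lTensor (M ⊗[k] N) (TensorProduct.comm k C D).toLinearMap) ∘ₗ
            (TensorProduct.tensorTensorTensorComm k M C N D).toLinearMap ∘ₗ
            (TensorProduct.map ρ ρ')) ∘ₗ
          ((TensorProduct.map μ ν) ∘ₗ (TensorProduct.tensorTensorTensorComm k A B M N).toLinearMap))) ∘ₗ
      (TensorProduct.assoc k H (A ⊗[k] B) (M ⊗[k] N)).toLinearMap ∘ₗ
      (LinearMap.rTensor (M ⊗[k] N)
        ((TensorProduct.assoc k H A B).toLinearMap ∘ₗ (LinearMap.rTensor B ΔLA) ∘ₗ cot.subtype))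
    = (TensorProduct.map
        ((TensorProduct.map μ ν) ∘ₗ (TensorProduct.tensorTensorTensorComm k A B M N).toLinearMap)
        (S.mkQ ∘ₗ (LinearMap.rTensor C actLD) ∘ₗ (TensorProduct.assoc k L D C).symm.toLinearMap)) ∘ₗ
      (TensorProduct.tensorTensorTensorComm k (A ⊗[k] B) L (M ⊗[k] N) (D ⊗[k] C)).toLinearMap ∘ₗ
      (LinearMap.lTensor ((A ⊗[k] B) ⊗[k] L)
        ((LinearMap.lTensor (M ⊗[k] N) (TensorProduct.comm k C D).toLinearMap) ∘ₗ
          (TensorProduct.tensorTensorTensorComm k M C N D).toLinearMap ∘ₗ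
          (TensorProduct.map ρ ρ'))) ∘ₗ
      (LinearMap.rTensor (M ⊗[k] N)
        ((TensorProduct.assoc k A B L).symm.toLinearMap ∘ₗ (LinearMap.lTensor A ΔRB) ∘ₗ
          cot.subtype)) := by
  have hbalanced : ∀ (d : D) (y : K) (c : C),
      S.mkQ (actRD (d ⊗ₜ y) ⊗ₜ c) = S.mkQ (d ⊗ₜ actLC (y ⊗ₜ c)) := fun d y c =>
    (Submodule.Quotient.eq S).mpr (hS ▸ Submodule.subset_span ⟨d, y, c, rfl⟩)
  have hcotensor : LinearMap.rTensor B ΔRA ∘ₗ cot.subtype =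
      ((TensorProduct.assoc k A K B).symm.toLinearMap ∘ₗ LinearMap.lTensor A ΔLB) ∘ₗ
        cot.subtype := by
    have hle : cot ≤ LinearMap.eqLocus (LinearMap.rTensor B ΔRA)
        ((TensorProduct.assoc k A K B).symm.toLinearMap ∘ₗ LinearMap.lTensor A ΔLB) := by
      rw [LinearMap.eqLocus_eq_ker_sub, hcot]
    exact LinearMap.ext fun x => hle x.2
  exact YetterDrinfeld.ydLeft_tensorAct_eq_ydRight_tensorAct hYDM hYDN S.mkQ hbalanced
    cot.subtype hcotensor
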